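/- arXiv:1205.4508 — 2 statements merged into one kernel-verified Lean document; each statement's English description precedes it below -/
import Mathlib

section
/- Suppose e^{-V} ∈ C_b^2(ℝ^d), condition (A1) holds, and Φ(0) > 0. Then there exists a constant C > 0 such that the Poincaré inequality μ_V(f^2) ≤ C·E_{α,V}(f,f) holds for every f ∈ D(E_{α,V}) with μ_V(f) = 0. -/
open MeasureTheory Real Filter Metric ENNReal

noncomputable section

/-- Euclidean space `ℝ^d`. -/
abbrev Euc (d : ℕ) := EuclideanSpace ℝ (Fin d)

/-- The normalizing constant `Z = ∫ e^{-V(x)} dx`. -/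
def ZV (d : ℕ) (V : Euc d → ℝ) : ℝ≥0∞ := ∫⁻ x, ENNReal.ofReal (Real.exp (-V x))

/-- The probability measure `μ_V(dx) = Z⁻¹ e^{-V(x)} dx`. -/
def muV (d : ℕ) (V : Euc d → ℝ) : Measure (Euc d) :=
  (ZV d V)⁻¹ • (volume.withDensity fun x => ENNReal.ofReal (Real.exp (-V x)))

/-- The stable-like Dirichlet form
`E_{α,V}(f,f) = ∫∫ |f(x)-f(y)|² / |x-y|^{d+α} dy μ_V(dx)`. -/
def dform (d : ℕ) (α : ℝ) (V : Euc d → ℝ) (f : Euc d → ℝ) : ℝ≥0∞ :=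
  ∫⁻ x, (∫⁻ y, ENNReal.ofReal ((f x - f y) ^ 2 / dist x y ^ ((d : ℝ) + α))) ∂(muV d V)

/-- Membership in the domain `D(E_{α,V}) = {f ∈ L²(μ_V) : E_{α,V}(f,f) < ∞}`. -/
def inDomain (d : ℕ) (α : ℝ) (V f : Euc d → ℝ) : Prop :=
  MemLp f 2 (muV d V) ∧ dform d α V f < ⊤

/-- The Poincaré inequality `μ_V(f²) ≤ C E_{α,V}(f,f)` for `f ∈ D(E_{α,V})` with `μ_V(f) = 0`. -/
def poincare (d : ℕ) (α : ℝ) (V : Euc d → ℝ) (C : ℝ) : Prop :=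
  ∀ f : Euc d → ℝ, inDomain d α V f → (∫ x, f x ∂(muV d V)) = 0 →
    (∫⁻ x, ENNReal.ofReal ((f x) ^ 2) ∂(muV d V)) ≤ ENNReal.ofReal C * dform d α V f

/-- `Φ(r) = inf_{|x| ≥ r} e^{V(x)} / (1+|x|)^{d+α}`. -/
def PhiV (d : ℕ) (α : ℝ) (V : Euc d → ℝ) (r : ℝ) : ℝ :=
  sInf ((fun x => Real.exp (V x) / (1 + ‖x‖) ^ ((d : ℝ) + α)) '' {x : Euc d | r ≤ ‖x‖})

/-- Generalized inverse `Φ⁻¹(s) = inf {t ≥ 0 : Φ(t) ≥ s}`. -/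
def PhiInv (d : ℕ) (α : ℝ) (V : Euc d → ℝ) (s : ℝ) : ℝ :=
  sInf {t : ℝ | 0 ≤ t ∧ s ≤ PhiV d α V t}

/-- `W ∈ C_b²(ℝ^d)`: twice continuously differentiable, bounded with bounded
first and second derivatives. -/
def Cb2 (d : ℕ) (W : Euc d → ℝ) : Prop :=
  ContDiff ℝ 2 W ∧
    ∃ M : ℝ, ∀ x, |W x| ≤ M ∧ ‖fderiv ℝ W x‖ ≤ M ∧ ‖fderiv ℝ (fderiv ℝ W) x‖ ≤ M

/-- Condition (A1):
`limsup_{r→∞} [ r^{d+α-1} sup_{|x|≥r-1} |∇e^{-V}(x)| + r^{d+α-2} sup_{|x|≥r-1} e^{-V(x)} ] = 0`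
(the bracket is nonnegative, so this is the same as convergence to `0`). -/
def condA1 (d : ℕ) (α : ℝ) (V : Euc d → ℝ) : Prop :=
  Filter.Tendsto
    (fun r : ℝ =>
      r ^ ((d : ℝ) + α - 1) *
          sSup ((fun x => ‖fderiv ℝ (fun y => Real.exp (-V y)) x‖) '' {x : Euc d | r - 1 ≤ ‖x‖}) +
        r ^ ((d : ℝ) + α - 2) *
          sSup ((fun x => Real.exp (-V x)) '' {x : Euc d | r - 1 ≤ ‖x‖}))
    Filter.atTop (nhds 0)

/-! If `Φ(0) > 0` then `e^{-V(y)} ≤ Φ(0)⁻¹ (1 + |y|)^{-(d+α)}`, and `|x - y| ≤ 2 (1 + |y|)`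
whenever `|x| ≤ |y|`, so there `e^{-V(y)} ≤ 2^{d+α} Φ(0)⁻¹ |x - y|^{-(d+α)}`.
For `f` of mean zero, `μ_V(f²) ≤ ∫∫ (f(x) - f(y))² μ_V(dy) μ_V(dx)`, and by symmetry the double
integral is at most twice its part over `|x| ≤ |y|`; there `μ_V(dy)` is bounded by the jump
kernel `Z⁻¹ 2^{d+α} Φ(0)⁻¹ |x - y|^{-(d+α)} dy`. -/

open ProbabilityTheory

section DoubleIntegral

variable {Ω : Type*} [MeasurableSpace Ω] {μ : Measure Ω}

theorem sq_integral_le_integral_sq [IsProbabilityMeasure μ] {h : Ω → ℝ} (hh : MemLp h 2 μ) :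
    (∫ x, h x ∂μ) ^ 2 ≤ ∫ x, h x ^ 2 ∂μ := by
  have := variance_nonneg h μ
  rw [variance_eq_sub hh] at this
  exact sub_nonneg.mp this

theorem lintegral_sq_le_lintegral_lintegral_sq_sub [IsProbabilityMeasure μ] {g : Ω → ℝ}
    (hg : MemLp g 2 μ) (hg0 : ∫ x, g x ∂μ = 0) :
    ∫⁻ x, ENNReal.ofReal (g x ^ 2) ∂μ ≤ ∫⁻ x, ∫⁻ y, ENNReal.ofReal ((g x - g y) ^ 2) ∂μ ∂μ := by
  refine lintegral_mono fun x => ?_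
  have hdiff : MemLp (fun y => g x - g y) 2 μ := (memLp_const _).sub hg
  have hmean : g x = ∫ y, (g x - g y) ∂μ := by
    rw [integral_sub (integrable_const _) (hg.integrable one_le_two), integral_const, hg0]
    simp
  calc ENNReal.ofReal (g x ^ 2) = ENNReal.ofReal ((∫ y, (g x - g y) ∂μ) ^ 2) := by rw [← hmean]
    _ ≤ ENNReal.ofReal (∫ y, (g x - g y) ^ 2 ∂μ) :=
        ENNReal.ofReal_le_ofReal (sq_integral_le_integral_sq hdiff)
    _ = ∫⁻ y, ENNReal.ofReal ((g x - g y) ^ 2) ∂μ :=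
        ofReal_integral_eq_lintegral_ofReal hdiff.integrable_sq
          (Eventually.of_forall fun y => sq_nonneg _)

theorem lintegral_lintegral_le_two_mul_of_symm [SFinite μ] {w : Ω → ℝ} (hw : Measurable w)
    {G : Ω → Ω → ℝ≥0∞} (hG : Measurable (Function.uncurry G)) (hsymm : ∀ x y, G x y = G y x) :
    ∫⁻ x, ∫⁻ y, G x y ∂μ ∂μ ≤ 2 * ∫⁻ x, ∫⁻ y, (if w x ≤ w y then G x y else 0) ∂μ ∂μ := by
  set F : Ω → Ω → ℝ≥0∞ := fun x y => if w x ≤ w y then G x y else 0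
  have hF : Measurable (Function.uncurry F) :=
    Measurable.ite (measurableSet_le (hw.comp measurable_fst) (hw.comp measurable_snd)) hG
      measurable_const
  have hsplit : ∀ x y, G x y ≤ F x y + F y x := by
    intro x y
    rcases le_total (w x) (w y) with h | h
    · simp [F, h]
    · simp [F, h, hsymm x y]
  calc ∫⁻ x, ∫⁻ y, G x y ∂μ ∂μ
      ≤ ∫⁻ x, ∫⁻ y, (F x y + F y x) ∂μ ∂μ :=
        lintegral_mono fun x => lintegral_mono fun y => hsplit x y
    _ = ∫⁻ x, ∫⁻ y, F x y ∂μ ∂μ + ∫⁻ x, ∫⁻ y, F y x ∂μ ∂μ := by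
        rw [← lintegral_add_left hF.lintegral_prod_right]
        exact lintegral_congr fun x => lintegral_add_left (hF.comp measurable_prodMk_left) _
    _ = 2 * ∫⁻ x, ∫⁻ y, F x y ∂μ ∂μ := by
        rw [lintegral_lintegral_swap (f := fun x y => F y x) (hF.comp measurable_swap).aemeasurable,
          two_mul]

end DoubleIntegral

section StableLike

variable {d : ℕ} {α : ℝ} {V : Euc d → ℝ}

theorem isProbabilityMeasure_muV (hZ0 : 0 < ZV d V) (hZtop : ZV d V < ⊤) :
    IsProbabilityMeasure (muV d V) := by
  constructor
  rw [muV, Measure.smul_apply, withDensity_apply _ MeasurableSet.univ, Measure.restrict_univ,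
    smul_eq_mul]
  exact ENNReal.inv_mul_cancel hZ0.ne' hZtop.ne

theorem volume_absolutelyContinuous_muV (hVm : Measurable V) (hZtop : ZV d V < ⊤) :
    (volume : Measure (Euc d)) ≪ muV d V :=
  (withDensity_absolutelyContinuous' (Real.measurable_exp.comp hVm.neg).ennreal_ofReal.aemeasurable
      (Eventually.of_forall fun x => by simp [Real.exp_pos])).trans
    (Measure.absolutelyContinuous_smul (ENNReal.inv_ne_zero.mpr hZtop.ne))

theorem lintegral_muV (hVm : Measurable V) {G : Euc d → ℝ≥0∞} (hG : Measurable G) :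
    ∫⁻ y, G y ∂muV d V = (ZV d V)⁻¹ * ∫⁻ y, ENNReal.ofReal (Real.exp (-V y)) * G y := by
  have hdensity : Measurable fun y => ENNReal.ofReal (Real.exp (-V y)) := by fun_prop
  rw [muV, lintegral_smul_measure, lintegral_withDensity_eq_lintegral_mul _ hdensity hG,
    smul_eq_mul]
  rfl

theorem dform_congr_ae (hac : (volume : Measure (Euc d)) ≪ muV d V) {f g : Euc d → ℝ}
    (hfg : f =ᵐ[muV d V] g) : dform d α V f = dform d α V g := by
  refine lintegral_congr_ae ?_
  filter_upwards [hfg] with x hx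
  refine lintegral_congr_ae ?_
  filter_upwards [hac.ae_le hfg] with y hy
  rw [hx, hy]

theorem phiV_zero_mul_le_exp (y : Euc d) :
    PhiV d α V 0 * (1 + ‖y‖) ^ ((d : ℝ) + α) ≤ Real.exp (V y) := by
  have hbdd : BddBelow ((fun x => Real.exp (V x) / (1 + ‖x‖) ^ ((d : ℝ) + α)) ''
      {x : Euc d | 0 ≤ ‖x‖}) := by
    refine ⟨0, ?_⟩
    rintro v ⟨x, -, rfl⟩
    positivity
  rw [← le_div_iff₀ (by positivity)]
  exact csInf_le hbdd ⟨y, norm_nonneg y, rfl⟩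

theorem exp_neg_mul_dist_rpow_le (hp : 0 ≤ (d : ℝ) + α) (hΦ : 0 < PhiV d α V 0) {x y : Euc d}
    (hxy : ‖x‖ ≤ ‖y‖) :
    Real.exp (-V y) * dist x y ^ ((d : ℝ) + α) ≤ 2 ^ ((d : ℝ) + α) / PhiV d α V 0 := by
  have hdist : dist x y ≤ 2 * (1 + ‖y‖) := by
    rw [dist_eq_norm]
    linarith [norm_sub_le x y]
  have hdensity : Real.exp (-V y) * (1 + ‖y‖) ^ ((d : ℝ) + α) ≤ 1 / PhiV d α V 0 := by
    rw [Real.exp_neg, inv_mul_le_iff₀ (Real.exp_pos _), mul_one_div, le_div_iff₀ hΦ, mul_comm]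
    exact phiV_zero_mul_le_exp y
  calc Real.exp (-V y) * dist x y ^ ((d : ℝ) + α)
      ≤ Real.exp (-V y) * (2 ^ ((d : ℝ) + α) * (1 + ‖y‖) ^ ((d : ℝ) + α)) := by
        rw [← Real.mul_rpow (by norm_num) (by positivity)]
        gcongr
    _ = 2 ^ ((d : ℝ) + α) * (Real.exp (-V y) * (1 + ‖y‖) ^ ((d : ℝ) + α)) := by ring
    _ ≤ 2 ^ ((d : ℝ) + α) * (1 / PhiV d α V 0) := by gcongr
    _ = 2 ^ ((d : ℝ) + α) / PhiV d α V 0 := by ring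

theorem exp_neg_mul_sq_sub_le (hp : 0 ≤ (d : ℝ) + α) (hΦ : 0 < PhiV d α V 0) (g : Euc d → ℝ)
    {x y : Euc d} (hxy : ‖x‖ ≤ ‖y‖) :
    Real.exp (-V y) * (g x - g y) ^ 2 ≤
      2 ^ ((d : ℝ) + α) / PhiV d α V 0 * ((g x - g y) ^ 2 / dist x y ^ ((d : ℝ) + α)) := by
  rcases eq_or_ne x y with rfl | hne
  · simp
  have hpos : 0 < dist x y ^ ((d : ℝ) + α) := Real.rpow_pos_of_pos (dist_pos.mpr hne) _
  rw [mul_div_assoc', le_div_iff₀ hpos]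
  calc Real.exp (-V y) * (g x - g y) ^ 2 * dist x y ^ ((d : ℝ) + α)
      = Real.exp (-V y) * dist x y ^ ((d : ℝ) + α) * (g x - g y) ^ 2 := by ring
    _ ≤ 2 ^ ((d : ℝ) + α) / PhiV d α V 0 * (g x - g y) ^ 2 :=
        mul_le_mul_of_nonneg_right (exp_neg_mul_dist_rpow_le hp hΦ hxy) (sq_nonneg _)

theorem lintegral_muV_ite_le (hp : 0 ≤ (d : ℝ) + α) (hVm : Measurable V)
    (hΦ : 0 < PhiV d α V 0) {g : Euc d → ℝ} (hg : Measurable g) (x : Euc d) :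
    ∫⁻ y, (if ‖x‖ ≤ ‖y‖ then ENNReal.ofReal ((g x - g y) ^ 2) else 0) ∂muV d V ≤
      (ZV d V)⁻¹ * ENNReal.ofReal (2 ^ ((d : ℝ) + α) / PhiV d α V 0) *
        ∫⁻ y, ENNReal.ofReal ((g x - g y) ^ 2 / dist x y ^ ((d : ℝ) + α)) := by
  have hG : Measurable fun y => if ‖x‖ ≤ ‖y‖ then ENNReal.ofReal ((g x - g y) ^ 2) else 0 :=
    Measurable.ite (measurableSet_le measurable_const measurable_norm) (by fun_prop)
      measurable_const
  rw [lintegral_muV hVm hG, mul_assoc, ← lintegral_const_mul' _ _ ENNReal.ofReal_ne_top]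
  refine mul_le_mul_right (lintegral_mono fun y => ?_) _
  split_ifs with hxy
  · rw [← ENNReal.ofReal_mul (Real.exp_pos _).le, ← ENNReal.ofReal_mul (by positivity)]
    exact ENNReal.ofReal_le_ofReal (exp_neg_mul_sq_sub_le hp hΦ g hxy)
  · simp

theorem lintegral_sq_le_mul_dform (hp : 0 ≤ (d : ℝ) + α) (hVm : Measurable V)
    (hZ0 : 0 < ZV d V) (hZtop : ZV d V < ⊤) (hΦ : 0 < PhiV d α V 0) {g : Euc d → ℝ}
    (hgm : Measurable g) (hg2 : MemLp g 2 (muV d V)) (hg0 : ∫ x, g x ∂muV d V = 0) :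
    ∫⁻ x, ENNReal.ofReal (g x ^ 2) ∂muV d V ≤
      2 * ((ZV d V)⁻¹ * ENNReal.ofReal (2 ^ ((d : ℝ) + α) / PhiV d α V 0)) * dform d α V g := by
  have := isProbabilityMeasure_muV hZ0 hZtop
  have hG : Measurable (Function.uncurry fun x y => ENNReal.ofReal ((g x - g y) ^ 2)) :=
    (((hgm.comp measurable_fst).sub (hgm.comp measurable_snd)).pow_const 2).ennreal_ofReal
  calc ∫⁻ x, ENNReal.ofReal (g x ^ 2) ∂muV d V
      ≤ ∫⁻ x, ∫⁻ y, ENNReal.ofReal ((g x - g y) ^ 2) ∂muV d V ∂muV d V :=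
        lintegral_sq_le_lintegral_lintegral_sq_sub hg2 hg0
    _ ≤ 2 * ∫⁻ x, ∫⁻ y, (if ‖x‖ ≤ ‖y‖ then ENNReal.ofReal ((g x - g y) ^ 2) else 0)
          ∂muV d V ∂muV d V :=
        lintegral_lintegral_le_two_mul_of_symm measurable_norm hG fun x y => by
          rw [← neg_sub, neg_sq]
    _ ≤ 2 * ((ZV d V)⁻¹ * ENNReal.ofReal (2 ^ ((d : ℝ) + α) / PhiV d α V 0) * dform d α V g) := by
        rw [dform, ← lintegral_const_mul' _ _ (ENNReal.mul_ne_top (ENNReal.inv_ne_top.mpr hZ0.ne')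
          ENNReal.ofReal_ne_top)]
        gcongr with x
        exact lintegral_muV_ite_le hp hVm hΦ hgm x
    _ = _ := by ring

end StableLike

theorem stmt0_general (d : ℕ) (α : ℝ) (hα0 : 0 < α)
    (V : Euc d → ℝ) (hVm : Measurable V) (hZ0 : 0 < ZV d V) (hZtop : ZV d V < ⊤)
    (hPhi0 : 0 < PhiV d α V 0) :
    ∃ C : ℝ, 0 < C ∧ poincare d α V C := by
  set K : ℝ≥0∞ := 2 * ((ZV d V)⁻¹ * ENNReal.ofReal (2 ^ ((d : ℝ) + α) / PhiV d α V 0))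
  have hK0 : K ≠ 0 := by
    have : 0 < 2 ^ ((d : ℝ) + α) / PhiV d α V 0 := by positivity
    simp [K, hZtop.ne, this]
  have hKtop : K ≠ ⊤ := by simp [K, ENNReal.mul_eq_top, hZ0.ne']
  refine ⟨K.toReal, ENNReal.toReal_pos hK0 hKtop, fun f hf hf0 => ?_⟩
  obtain ⟨g, hgm, hfg⟩ := hf.1.aestronglyMeasurable.aemeasurable
  rw [ENNReal.ofReal_toReal hKtop, lintegral_congr_ae (hfg.mono fun x hx => by rw [hx]),
    dform_congr_ae (volume_absolutelyContinuous_muV hVm hZtop) hfg]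
  exact lintegral_sq_le_mul_dform (by positivity) hVm hZ0 hZtop hPhi0 hgm (hf.1.ae_eq hfg)
    (by rwa [← integral_congr_ae hfg])

/-- Theorem 1.1(1): under `e^{-V} ∈ C_b²`, condition (A1) and `Φ(0) > 0`, the
Poincaré inequality holds for some constant `C > 0`. -/
theorem stmt0 (d : ℕ) (hd : 1 ≤ d) (α : ℝ) (hα0 : 0 < α) (hα2 : α < 2)
    (V : Euc d → ℝ) (hVm : Measurable V) (hZ0 : 0 < ZV d V) (hZtop : ZV d V < ⊤)
    (hCb : Cb2 d (fun x => Real.exp (-V x))) (hA1 : condA1 d α V)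
    (hPhi0 : 0 < PhiV d α V 0) :
    ∃ C : ℝ, 0 < C ∧ poincare d α V C :=
  stmt0_general d α hα0 V hVm hZ0 hZtop hPhi0
end
end

section
/- Let V(x) = (d+ε)/2 · log(1+|x|^2) with ε ∈ (0,α). Then there exists a constant c > 0 such that the weak Poincaré inequality μ_V(f^2) ≤ β̃(r)·E_{α,V}(f,f) + r·‖f‖_∞^2 holds for all r > 0 and all bounded f ∈ D(E_{α,V}) with μ_V(f) = 0, with β̃(r) = c·(1 + r^{-(α-ε)/ε}). Here ‖f‖_∞ denotes the essential supremum of |f|. -/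
open MeasureTheory Real Filter Metric ENNReal

noncomputable section

/-- The weak Poincaré inequality
`μ_V(f²) ≤ β̃(r) E_{α,V}(f,f) + r ‖f‖_∞²` for all `r > 0` and all essentially bounded
`f ∈ D(E_{α,V})` with `μ_V(f) = 0`. -/
def weakPoincare (d : ℕ) (α : ℝ) (V : Euc d → ℝ) (β : ℝ → ℝ) : Prop :=
  ∀ r : ℝ, 0 < r → ∀ f : Euc d → ℝ, inDomain d α V f → eLpNorm f ⊤ (muV d V) < ⊤ →
    (∫ x, f x ∂(muV d V)) = 0 →
    (∫⁻ x, ENNReal.ofReal ((f x) ^ 2) ∂(muV d V)) ≤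
      ENNReal.ofReal (β r) * dform d α V f +
        ENNReal.ofReal r * (eLpNorm f ⊤ (muV d V)) ^ 2

/-- `V(x) = (d+ε)/2 · log(1+|x|²)`. -/
def Vlog (d : ℕ) (ε : ℝ) : Euc d → ℝ := fun x => ((d : ℝ) + ε) / 2 * Real.log (1 + ‖x‖ ^ 2)

/-!
For mean-zero `f` and every `x`, `μ_V(f²) ≤ ∫ (f(y) - f(x))² μ_V(dy)`. Average this over `x` in
the unit ball and split the `y`-integral at radius `R`. Inside `B_R`, since `|x - y| ≤ 1 + |y|`,
the density `e^{-V(y)} ≤ 2^{(d+ε)/2} (1+|y|)^{-(d+ε)}` is at most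
`2^{(d+ε)/2} (1+R)^{α-ε} |x-y|^{-(d+α)}`, which produces the Dirichlet form. Outside `B_R` the
integrand is at most `4‖f‖_∞²`, and `μ_V(B_Rᶜ) ≲ R^{-ε}`. Taking `R ≍ r^{-1/ε}` turns the second
term into `r‖f‖_∞²` and makes the first coefficient `≲ 1 + r^{-(α-ε)/ε}`.
-/

lemma ofReal_sub_sq_le {a b : ℝ} {M : ℝ≥0∞} (ha : ‖a‖ₑ ≤ M) (hb : ‖b‖ₑ ≤ M) :
    ENNReal.ofReal ((a - b) ^ 2) ≤ 4 * M ^ 2 := by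
  rw [← sq_abs, ENNReal.ofReal_pow (abs_nonneg _), ← Real.enorm_eq_ofReal_abs]
  calc ‖a - b‖ₑ ^ 2 ≤ (M + M) ^ 2 := by gcongr; exact enorm_sub_le.trans (add_le_add ha hb)
    _ = 4 * M ^ 2 := by ring

section General

variable {Ω : Type*} [MeasurableSpace Ω] {μ : Measure Ω} [IsProbabilityMeasure μ] {f : Ω → ℝ}

open ProbabilityTheory in
lemma lintegral_sq_le_lintegral_sub_sq (hf : MemLp f 2 μ) (h0 : ∫ x, f x ∂μ = 0) (c : ℝ) :
    ∫⁻ x, ENNReal.ofReal (f x ^ 2) ∂μ ≤ ∫⁻ x, ENNReal.ofReal ((f x - c) ^ 2) ∂μ := by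
  have hfc : MemLp (fun x => f x - c) 2 μ := hf.sub (memLp_const c)
  rw [← ofReal_integral_eq_lintegral_ofReal hf.integrable_sq (ae_of_all _ fun _ => sq_nonneg _),
    ← ofReal_integral_eq_lintegral_ofReal hfc.integrable_sq (ae_of_all _ fun _ => sq_nonneg _)]
  apply ENNReal.ofReal_le_ofReal
  calc ∫ x, f x ^ 2 ∂μ = Var[f; μ] := (variance_of_integral_eq_zero hf.aemeasurable h0).symm
    _ = Var[fun x => f x - c; μ] := (variance_sub_const hf.aestronglyMeasurable c).symm
    _ ≤ ∫ x, (f x - c) ^ 2 ∂μ := variance_le_expectation_sq hfc.aestronglyMeasurable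

lemma mul_lintegral_sq_le (hf : MemLp f 2 μ) (h0 : ∫ x, f x ∂μ = 0) (A : Set Ω) {B : Set Ω}
    (hB : MeasurableSet B) :
    μ A * ∫⁻ x, ENNReal.ofReal (f x ^ 2) ∂μ ≤
      ∫⁻ x in A, ∫⁻ y in B, ENNReal.ofReal ((f y - f x) ^ 2) ∂μ ∂μ +
        4 * eLpNorm f ⊤ μ ^ 2 * μ Bᶜ := by
  set M := eLpNorm f ⊤ μ
  have hM : ∀ᵐ x ∂μ, ‖f x‖ₑ ≤ M := by
    simpa only [M, eLpNorm_exponent_top] using enorm_ae_le_eLpNormEssSup f μ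
  have hpoint : ∀ᵐ x ∂μ, ∫⁻ t, ENNReal.ofReal (f t ^ 2) ∂μ ≤
      ∫⁻ y in B, ENNReal.ofReal ((f y - f x) ^ 2) ∂μ + 4 * M ^ 2 * μ Bᶜ := by
    filter_upwards [hM] with x hxM
    calc ∫⁻ t, ENNReal.ofReal (f t ^ 2) ∂μ
        ≤ ∫⁻ y, ENNReal.ofReal ((f y - f x) ^ 2) ∂μ := lintegral_sq_le_lintegral_sub_sq hf h0 _
      _ = ∫⁻ y in B, ENNReal.ofReal ((f y - f x) ^ 2) ∂μ +
          ∫⁻ y in Bᶜ, ENNReal.ofReal ((f y - f x) ^ 2) ∂μ := (lintegral_add_compl _ hB).symm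
      _ ≤ ∫⁻ y in B, ENNReal.ofReal ((f y - f x) ^ 2) ∂μ + ∫⁻ _ in Bᶜ, 4 * M ^ 2 ∂μ := by
          gcongr 1
          exact lintegral_mono_ae (ae_restrict_of_ae (hM.mono fun y hy => ofReal_sub_sq_le hy hxM))
      _ = _ := by rw [setLIntegral_const]
  calc μ A * ∫⁻ x, ENNReal.ofReal (f x ^ 2) ∂μ
      = ∫⁻ _ in A, ∫⁻ t, ENNReal.ofReal (f t ^ 2) ∂μ ∂μ := by rw [setLIntegral_const, mul_comm]
    _ ≤ ∫⁻ x in A, (∫⁻ y in B, ENNReal.ofReal ((f y - f x) ^ 2) ∂μ + 4 * M ^ 2 * μ Bᶜ) ∂μ :=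
        lintegral_mono_ae (ae_restrict_of_ae hpoint)
    _ = ∫⁻ x in A, ∫⁻ y in B, ENNReal.ofReal ((f y - f x) ^ 2) ∂μ ∂μ +
          4 * M ^ 2 * μ Bᶜ * μ A := by
        rw [lintegral_add_right _ measurable_const, setLIntegral_const]
    _ ≤ _ := add_le_add le_rfl (mul_le_of_le_one_right' prob_le_one)

end General

section AddHaar

variable {E : Type*} [NormedAddCommGroup E] [NormedSpace ℝ E] [MeasurableSpace E] [BorelSpace E]
  [FiniteDimensional ℝ E] (μ : Measure E) [μ.IsAddHaarMeasure]

lemma lintegral_comp_inv_smul (g : E → ℝ≥0∞) {R : ℝ} (hR : 0 < R) :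
    ∫⁻ x, g (R⁻¹ • x) ∂μ = ENNReal.ofReal (R ^ Module.finrank ℝ E) * ∫⁻ x, g x ∂μ := by
  have he : MeasurableEmbedding (R⁻¹ • · : E → E) :=
    (Homeomorph.smulOfNeZero _ (inv_ne_zero hR.ne')).measurableEmbedding
  rw [← he.lintegral_map, Measure.map_addHaar_smul μ (inv_ne_zero hR.ne'), lintegral_smul_measure,
    inv_pow, inv_inv, abs_of_pos (by positivity), smul_eq_mul]

lemma lintegral_lt_top_of_le_one_add_norm_rpow {g : E → ℝ≥0∞} {C : ℝ≥0∞} (hC : C ≠ ⊤) {s : ℝ}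
    (hs : Module.finrank ℝ E < s) (hg : ∀ x, g x ≤ C * ENNReal.ofReal ((1 + ‖x‖) ^ (-s))) :
    ∫⁻ x, g x ∂μ < ⊤ :=
  (lintegral_mono hg).trans_lt <| by
    rw [lintegral_const_mul' _ _ hC]
    exact ENNReal.mul_lt_top hC.lt_top (finite_integral_one_add_norm hs)

end AddHaar

lemma exists_balancing_radius {ε p T r : ℝ} (hε : 0 < ε) (hp : 0 ≤ p) (hT : 0 ≤ T) (hr : 0 < r) :
    ∃ R, 0 < R ∧ T * R ^ (-ε) ≤ r ∧
      (1 + R) ^ p ≤ 2 ^ p * (1 + T ^ (p / ε)) * (1 + r ^ (-p / ε)) := by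
  set R₀ := (T / r) ^ (1 / ε)
  have hR₀ : 0 ≤ R₀ := by positivity
  have hR₀ε : R₀ ^ ε = T / r := by
    rw [← Real.rpow_mul (by positivity), one_div_mul_cancel hε.ne', Real.rpow_one]
  have hR₀p : R₀ ^ p = T ^ (p / ε) * r ^ (-p / ε) := by
    rw [← Real.rpow_mul (by positivity), Real.div_rpow hT hr.le, neg_div, Real.rpow_neg hr.le,
      one_div_mul_eq_div, div_eq_mul_inv]
  set R := max 1 R₀
  have hR1 : 1 ≤ R := le_max_left _ _
  have hR : 0 < R := one_pos.trans_le hR1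
  refine ⟨R, hR, ?_, ?_⟩
  · have : T / r ≤ R ^ ε := hR₀ε ▸ Real.rpow_le_rpow hR₀ (le_max_right _ _) hε.le
    rw [Real.rpow_neg hR.le, ← div_eq_mul_inv, div_le_iff₀ (by positivity)]
    rwa [div_le_iff₀ hr, mul_comm] at this
  · have hRp : R ^ p ≤ 1 + T ^ (p / ε) * r ^ (-p / ε) := by
      rcases max_choice 1 R₀ with h | h <;> simp only [R, h]
      · rw [Real.one_rpow]; linarith [mul_nonneg (Real.rpow_nonneg hT (p / ε))
          (Real.rpow_nonneg hr.le (-p / ε))]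
      · rw [hR₀p]; linarith
    calc (1 + R) ^ p ≤ (2 * R) ^ p := by gcongr; linarith
      _ = 2 ^ p * R ^ p := Real.mul_rpow zero_le_two hR.le
      _ ≤ 2 ^ p * (1 + T ^ (p / ε) * r ^ (-p / ε)) := by gcongr
      _ ≤ 2 ^ p * ((1 + T ^ (p / ε)) * (1 + r ^ (-p / ε))) := by
          gcongr
          nlinarith [Real.rpow_nonneg hT (p / ε), Real.rpow_nonneg hr.le (-p / ε)]
      _ = _ := by ring

section Bracket

variable {E : Type*} [NormedAddCommGroup E]

lemma one_add_sq_rpow_neg_le {s t : ℝ} (hs : 0 ≤ s) (ht : 0 < t) :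
    (1 + t ^ 2) ^ (-s / 2) ≤ t ^ (-s) := by
  calc (1 + t ^ 2) ^ (-s / 2) ≤ (t ^ 2) ^ (-s / 2) :=
        Real.rpow_le_rpow_of_nonpos (by positivity) (by linarith) (by linarith)
    _ = t ^ (-s) := by
        rw [← Real.rpow_natCast, ← Real.rpow_mul ht.le]
        ring_nf

lemma max_one_norm_rpow_neg_le {s : ℝ} (hs : 0 ≤ s) (x : E) :
    max 1 ‖x‖ ^ (-s) ≤ 2 ^ s * (1 + ‖x‖) ^ (-s) := by
  have hm : 0 < max 1 ‖x‖ := one_pos.trans_le (le_max_left _ _)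
  calc max 1 ‖x‖ ^ (-s) = 2 ^ s * (2 * max 1 ‖x‖) ^ (-s) := by
        rw [Real.mul_rpow zero_le_two hm.le, ← mul_assoc, ← Real.rpow_add two_pos, add_neg_cancel,
          Real.rpow_zero, one_mul]
    _ ≤ 2 ^ s * (1 + ‖x‖) ^ (-s) := by
        refine mul_le_mul_of_nonneg_left (Real.rpow_le_rpow_of_nonpos (by positivity) ?_
          (by linarith)) (by positivity)
        linarith [le_max_left 1 ‖x‖, le_max_right 1 ‖x‖]

lemma one_add_sq_rpow_mul_dist_rpow_le {s t R : ℝ} (hs : 0 < s) (hst : s ≤ t) {x y : E}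
    (hx : ‖x‖ ≤ 1) (hy : ‖y‖ ≤ R) :
    (1 + ‖y‖ ^ 2) ^ (-s / 2) * dist x y ^ t ≤ 2 ^ (s / 2) * (1 + R) ^ (t - s) := by
  have hy1 : 0 < 1 + ‖y‖ := by positivity
  calc (1 + ‖y‖ ^ 2) ^ (-s / 2) * dist x y ^ t
      ≤ 2 ^ (s / 2) * (1 + ‖y‖) ^ (-s) * (1 + ‖y‖) ^ t := by
        gcongr
        · exact rpow_neg_one_add_norm_sq_le y hs
        · linarith
        · exact (dist_le_norm_add_norm x y).trans (add_le_add_left hx _)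
    _ = 2 ^ (s / 2) * (1 + ‖y‖) ^ (t - s) := by
        rw [mul_assoc, ← Real.rpow_add hy1, neg_add_eq_sub]
    _ ≤ 2 ^ (s / 2) * (1 + R) ^ (t - s) := by gcongr

end Bracket

namespace Vlog

variable {d : ℕ} {ε : ℝ}

def density (d : ℕ) (ε : ℝ) (x : Euc d) : ℝ≥0∞ :=
  ENNReal.ofReal ((1 + ‖x‖ ^ 2) ^ (-((d : ℝ) + ε) / 2))

lemma measurable_density : Measurable (density d ε) := by
  unfold density; fun_prop

lemma density_ne_zero (x : Euc d) : density d ε x ≠ 0 := by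
  rw [density, Ne, ENNReal.ofReal_eq_zero, not_le]
  positivity

lemma ofReal_exp_neg (x : Euc d) :
    ENNReal.ofReal (Real.exp (-Vlog d ε x)) = density d ε x := by
  rw [density, Vlog, Real.rpow_def_of_pos (by positivity)]
  ring_nf

lemma muV_eq : muV d (Vlog d ε) = (ZV d (Vlog d ε))⁻¹ • volume.withDensity (density d ε) := by
  simp only [muV, ofReal_exp_neg]

lemma ZV_eq : ZV d (Vlog d ε) = volume.withDensity (density d ε) Set.univ := by
  rw [withDensity_apply _ MeasurableSet.univ, Measure.restrict_univ]
  exact lintegral_congr ofReal_exp_neg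

lemma withDensity_density_eq_zero_iff {s : Set (Euc d)} :
    volume.withDensity (density d ε) s = 0 ↔ volume s = 0 := by
  simp [withDensity_apply_eq_zero' measurable_density.aemeasurable, density_ne_zero]

lemma ZV_ne_zero : ZV d (Vlog d ε) ≠ 0 := by
  rw [ZV_eq, Ne, withDensity_density_eq_zero_iff]
  exact Measure.measure_univ_ne_zero.mpr (NeZero.ne _)

lemma ZV_ne_top (hε : 0 < ε) : ZV d (Vlog d ε) ≠ ⊤ := by
  rw [ZV_eq, withDensity_apply _ MeasurableSet.univ, Measure.restrict_univ]
  refine (lintegral_lt_top_of_le_one_add_norm_rpow volume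
    (ENNReal.ofReal_ne_top (r := 2 ^ (((d : ℝ) + ε) / 2))) (s := (d : ℝ) + ε)
    (by rw [finrank_euclideanSpace_fin]; linarith) fun x => ?_).ne
  rw [density, ← ENNReal.ofReal_mul (by positivity)]
  exact ENNReal.ofReal_le_ofReal (rpow_neg_one_add_norm_sq_le x (by positivity))

lemma isProbabilityMeasure_muV (hε : 0 < ε) : IsProbabilityMeasure (muV d (Vlog d ε)) := by
  constructor
  rw [muV_eq, Measure.smul_apply, smul_eq_mul, ← ZV_eq,
    ENNReal.inv_mul_cancel ZV_ne_zero (ZV_ne_top hε)]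

lemma muV_ball_ne_zero (hε : 0 < ε) : muV d (Vlog d ε) (ball 0 1) ≠ 0 := by
  rw [muV_eq, Measure.smul_apply, smul_eq_mul]
  refine mul_ne_zero (ENNReal.inv_ne_zero.mpr (ZV_ne_top hε)) ?_
  rw [Ne, withDensity_density_eq_zero_iff]
  exact (measure_ball_pos volume _ one_pos).ne'

lemma setLIntegral_muV {s : Set (Euc d)} (hs : MeasurableSet s) (F : Euc d → ℝ≥0∞) :
    ∫⁻ y in s, F y ∂(muV d (Vlog d ε)) =
      (ZV d (Vlog d ε))⁻¹ * ∫⁻ y in s, density d ε y * F y := by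
  rw [muV_eq, Measure.restrict_smul, lintegral_smul_measure, smul_eq_mul,
    setLIntegral_withDensity_eq_setLIntegral_mul_non_measurable volume measurable_density F hs
      (ae_of_all _ fun _ => ENNReal.ofReal_lt_top)]
  rfl

lemma density_le_of_le_norm (hε : 0 < ε) {R : ℝ} (hR : 0 < R) {y : Euc d} (hy : R ≤ ‖y‖) :
    density d ε y ≤ ENNReal.ofReal (R ^ (-((d : ℝ) + ε))) *
      ENNReal.ofReal (max 1 ‖R⁻¹ • y‖ ^ (-((d : ℝ) + ε))) := by
  have hy0 : 0 < ‖y‖ := hR.trans_le hy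
  have hmax : max 1 ‖R⁻¹ • y‖ = R⁻¹ * ‖y‖ := by
    rw [norm_smul, Real.norm_of_nonneg (inv_nonneg.2 hR.le), max_eq_right]
    rwa [inv_mul_eq_div, one_le_div hR]
  rw [← ENNReal.ofReal_mul (by positivity), hmax, ← Real.mul_rpow hR.le (by positivity),
    mul_inv_cancel_left₀ hR.ne']
  exact ENNReal.ofReal_le_ofReal (one_add_sq_rpow_neg_le (by positivity) hy0)

/-- Compare `e^{-V(y)}` with `|y|^{-(d+ε)}` and rescale `B_Rᶜ` to `B_1ᶜ`. -/
lemma muV_compl_ball_le (hε : 0 < ε) :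
    ∃ K : ℝ, 0 ≤ K ∧ ∀ R, 0 < R →
      muV d (Vlog d ε) (ball 0 R)ᶜ ≤ ENNReal.ofReal (K * R ^ (-ε)) := by
  set s : ℝ := (d : ℝ) + ε
  set I := ∫⁻ z : Euc d, ENNReal.ofReal (max 1 ‖z‖ ^ (-s))
  have hI : I ≠ ⊤ := by
    refine (lintegral_lt_top_of_le_one_add_norm_rpow volume
      (ENNReal.ofReal_ne_top (r := 2 ^ s)) (s := s)
      (by rw [finrank_euclideanSpace_fin]; linarith) fun z => ?_).ne
    rw [← ENNReal.ofReal_mul (by positivity)]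
    exact ENNReal.ofReal_le_ofReal (max_one_norm_rpow_neg_le (by positivity) z)
  refine ⟨((ZV d (Vlog d ε))⁻¹ * I).toReal, ENNReal.toReal_nonneg, fun R hR => ?_⟩
  calc muV d (Vlog d ε) (ball 0 R)ᶜ
      = (ZV d (Vlog d ε))⁻¹ * ∫⁻ y in (ball 0 R)ᶜ, density d ε y := by
        rw [muV_eq, Measure.smul_apply, smul_eq_mul,
          withDensity_apply _ measurableSet_ball.compl]
    _ ≤ (ZV d (Vlog d ε))⁻¹ *
          ∫⁻ y, ENNReal.ofReal (R ^ (-s)) * ENNReal.ofReal (max 1 ‖R⁻¹ • y‖ ^ (-s)) := by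
        refine mul_le_mul' le_rfl
          ((setLIntegral_mono' measurableSet_ball.compl fun y hy => ?_).trans
            (setLIntegral_le_lintegral _ _))
        exact density_le_of_le_norm hε hR (by simpa using hy)
    _ = (ZV d (Vlog d ε))⁻¹ * I * ENNReal.ofReal (R ^ (-s) * R ^ d) := by
        rw [lintegral_const_mul' _ _ ENNReal.ofReal_ne_top,
          lintegral_comp_inv_smul volume (fun z => ENNReal.ofReal (max 1 ‖z‖ ^ (-s))) hR,
          finrank_euclideanSpace_fin, ENNReal.ofReal_mul (by positivity)]
        ring
    _ = ENNReal.ofReal (((ZV d (Vlog d ε))⁻¹ * I).toReal * R ^ (-ε)) := by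
        rw [ENNReal.ofReal_mul ENNReal.toReal_nonneg,
          ENNReal.ofReal_toReal (ENNReal.mul_ne_top (ENNReal.inv_ne_top.2 ZV_ne_zero) hI),
          ← Real.rpow_natCast, ← Real.rpow_add hR,
          show -s + (d : ℝ) = -ε by simp only [s]; ring]

lemma density_mul_le {α : ℝ} (hε : 0 < ε) (hεα : ε ≤ α) {R : ℝ} {x y : Euc d} (hx : ‖x‖ ≤ 1)
    (hy : ‖y‖ ≤ R) (f : Euc d → ℝ) :
    density d ε y * ENNReal.ofReal ((f y - f x) ^ 2) ≤
      ENNReal.ofReal (2 ^ (((d : ℝ) + ε) / 2) * (1 + R) ^ (α - ε)) *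
        ENNReal.ofReal ((f x - f y) ^ 2 / dist x y ^ ((d : ℝ) + α)) := by
  rcases eq_or_ne x y with rfl | hxy
  · simp
  have hR : 0 ≤ R := (norm_nonneg y).trans hy
  have hD : 0 < dist x y ^ ((d : ℝ) + α) := Real.rpow_pos_of_pos (dist_pos.2 hxy) _
  have key := one_add_sq_rpow_mul_dist_rpow_le (by positivity : 0 < (d : ℝ) + ε)
    (by linarith : (d : ℝ) + ε ≤ d + α) hx hy
  rw [show (d : ℝ) + α - (d + ε) = α - ε by ring] at key
  rw [density, ← ENNReal.ofReal_mul (by positivity), ← ENNReal.ofReal_mul (by positivity)]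
  apply ENNReal.ofReal_le_ofReal
  rw [← mul_div_assoc, le_div_iff₀ hD]
  calc (1 + ‖y‖ ^ 2) ^ (-((d : ℝ) + ε) / 2) * (f y - f x) ^ 2 * dist x y ^ ((d : ℝ) + α)
      = (1 + ‖y‖ ^ 2) ^ (-((d : ℝ) + ε) / 2) * dist x y ^ ((d : ℝ) + α) * (f x - f y) ^ 2 := by
        ring
    _ ≤ _ := by gcongr

lemma setLIntegral_ball_le {α : ℝ} (hε : 0 < ε) (hεα : ε ≤ α) (R : ℝ) {x : Euc d}
    (hx : ‖x‖ ≤ 1) (f : Euc d → ℝ) :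
    ∫⁻ y in ball 0 R, ENNReal.ofReal ((f y - f x) ^ 2) ∂(muV d (Vlog d ε)) ≤
      (ZV d (Vlog d ε))⁻¹ * ENNReal.ofReal (2 ^ (((d : ℝ) + ε) / 2) * (1 + R) ^ (α - ε)) *
        ∫⁻ y, ENNReal.ofReal ((f x - f y) ^ 2 / dist x y ^ ((d : ℝ) + α)) := by
  rw [setLIntegral_muV measurableSet_ball, mul_assoc]
  gcongr
  calc ∫⁻ y in ball 0 R, density d ε y * ENNReal.ofReal ((f y - f x) ^ 2)
      ≤ ∫⁻ y in ball 0 R, ENNReal.ofReal (2 ^ (((d : ℝ) + ε) / 2) * (1 + R) ^ (α - ε)) *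
          ENNReal.ofReal ((f x - f y) ^ 2 / dist x y ^ ((d : ℝ) + α)) :=
        setLIntegral_mono' measurableSet_ball fun y hy =>
          density_mul_le hε hεα hx (mem_ball_zero_iff.1 hy).le f
    _ ≤ _ := setLIntegral_le_lintegral _ _
    _ = _ := lintegral_const_mul' _ _ ENNReal.ofReal_ne_top

lemma lintegral_ball_lintegral_ball_le_dform {α : ℝ} (hε : 0 < ε) (hεα : ε ≤ α) (R : ℝ)
    (f : Euc d → ℝ) :
    ∫⁻ x in ball 0 1, ∫⁻ y in ball 0 R, ENNReal.ofReal ((f y - f x) ^ 2)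
        ∂(muV d (Vlog d ε)) ∂(muV d (Vlog d ε)) ≤
      (ZV d (Vlog d ε))⁻¹ * ENNReal.ofReal (2 ^ (((d : ℝ) + ε) / 2) * (1 + R) ^ (α - ε)) *
        dform d α (Vlog d ε) f := by
  calc ∫⁻ x in ball 0 1, ∫⁻ y in ball 0 R, ENNReal.ofReal ((f y - f x) ^ 2)
        ∂(muV d (Vlog d ε)) ∂(muV d (Vlog d ε))
      ≤ ∫⁻ x in ball 0 1, ((ZV d (Vlog d ε))⁻¹ *
          ENNReal.ofReal (2 ^ (((d : ℝ) + ε) / 2) * (1 + R) ^ (α - ε)) *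
          ∫⁻ y, ENNReal.ofReal ((f x - f y) ^ 2 / dist x y ^ ((d : ℝ) + α)))
          ∂(muV d (Vlog d ε)) :=
        setLIntegral_mono' measurableSet_ball fun x hx =>
          setLIntegral_ball_le hε hεα R (mem_ball_zero_iff.1 hx).le f
    _ ≤ _ := setLIntegral_le_lintegral _ _
    _ = _ := by
        rw [lintegral_const_mul' _ _
          (ENNReal.mul_ne_top (ENNReal.inv_ne_top.2 ZV_ne_zero) ENNReal.ofReal_ne_top)]
        rfl

lemma exists_lintegral_sq_le {α : ℝ} (hε : 0 < ε) (hεα : ε ≤ α) :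
    ∃ a T : ℝ, 0 ≤ a ∧ 0 ≤ T ∧ ∀ R, 0 < R → ∀ f : Euc d → ℝ, MemLp f 2 (muV d (Vlog d ε)) →
      ∫ x, f x ∂(muV d (Vlog d ε)) = 0 →
      ∫⁻ x, ENNReal.ofReal (f x ^ 2) ∂(muV d (Vlog d ε)) ≤
        ENNReal.ofReal (a * (1 + R) ^ (α - ε)) * dform d α (Vlog d ε) f +
          ENNReal.ofReal (T * R ^ (-ε)) * eLpNorm f ⊤ (muV d (Vlog d ε)) ^ 2 := by
  have := isProbabilityMeasure_muV (d := d) hε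
  obtain ⟨K, hK, htail⟩ := muV_compl_ball_le (d := d) hε
  set μ := muV d (Vlog d ε)
  set w := (μ (ball 0 1))⁻¹
  have hw : w ≠ ⊤ := ENNReal.inv_ne_top.2 (muV_ball_ne_zero hε)
  have hwZ : w * (ZV d (Vlog d ε))⁻¹ ≠ ⊤ := ENNReal.mul_ne_top hw (ENNReal.inv_ne_top.2 ZV_ne_zero)
  refine ⟨(w * (ZV d (Vlog d ε))⁻¹).toReal * 2 ^ (((d : ℝ) + ε) / 2), w.toReal * 4 * K,
    by positivity, by positivity, fun R hR f hf h0 => ?_⟩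
  have hsplit := mul_lintegral_sq_le hf h0 (ball 0 1) (measurableSet_ball (x := 0) (ε := R))
  rw [ENNReal.mul_le_iff_le_inv (muV_ball_ne_zero hε) (measure_ne_top _ _)] at hsplit
  refine hsplit.trans ?_
  calc w * (∫⁻ x in ball 0 1, ∫⁻ y in ball 0 R, ENNReal.ofReal ((f y - f x) ^ 2) ∂μ ∂μ +
        4 * eLpNorm f ⊤ μ ^ 2 * μ (ball 0 R)ᶜ)
      ≤ w * ((ZV d (Vlog d ε))⁻¹ * ENNReal.ofReal (2 ^ (((d : ℝ) + ε) / 2) * (1 + R) ^ (α - ε)) *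
          dform d α (Vlog d ε) f + 4 * eLpNorm f ⊤ μ ^ 2 * ENNReal.ofReal (K * R ^ (-ε))) := by
        gcongr
        · exact lintegral_ball_lintegral_ball_le_dform hε hεα R f
        · exact htail R hR
    _ = _ := by
        simp (disch := positivity) only [ENNReal.ofReal_mul, ENNReal.ofReal_toReal hw,
          ENNReal.ofReal_toReal hwZ, ENNReal.ofReal_ofNat]
        ring

end Vlog

theorem stmt5_general (d : ℕ) (α : ℝ) (ε : ℝ) (hε0 : 0 < ε) (hεα : ε < α) :
    ∃ c : ℝ, 0 < c ∧
      weakPoincare d α (Vlog d ε) (fun r => c * (1 + r ^ (-(α - ε) / ε))) := by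
  obtain ⟨a, T, ha, hT, hbound⟩ := Vlog.exists_lintegral_sq_le (d := d) hε0 hεα.le
  refine ⟨1 + a * (2 ^ (α - ε) * (1 + T ^ ((α - ε) / ε))), by positivity, ?_⟩
  intro r hr f hf _ h0
  obtain ⟨R, hR, hRtail, hRbulk⟩ := exists_balancing_radius hε0 (sub_nonneg.2 hεα.le) hT hr
  refine (hbound R hR f hf.1 h0).trans (add_le_add ?_ ?_)
  · refine mul_le_mul' (ENNReal.ofReal_le_ofReal ?_) le_rfl
    calc a * (1 + R) ^ (α - ε)
        ≤ a * (2 ^ (α - ε) * (1 + T ^ ((α - ε) / ε)) * (1 + r ^ (-(α - ε) / ε))) :=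
          mul_le_mul_of_nonneg_left hRbulk ha
      _ ≤ (1 + a * (2 ^ (α - ε) * (1 + T ^ ((α - ε) / ε)))) * (1 + r ^ (-(α - ε) / ε)) := by
          rw [← mul_assoc]
          gcongr
          exact le_add_of_nonneg_left zero_le_one
  · gcongr

/-- Corollary 1.2(3), upper bound: for `V(x) = (d+ε)/2 log(1+|x|²)`, `ε ∈ (0,α)`, the weak
Poincaré inequality holds with `β̃(r) = c (1 + r^{-(α-ε)/ε})`. -/
theorem stmt5 (d : ℕ) (hd : 1 ≤ d) (α : ℝ) (hα0 : 0 < α) (hα2 : α < 2)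
    (ε : ℝ) (hε0 : 0 < ε) (hεα : ε < α) :
    ∃ c : ℝ, 0 < c ∧
      weakPoincare d α (Vlog d ε) (fun r => c * (1 + r ^ (-(α - ε) / ε))) :=
  stmt5_general d α ε hε0 hεα
end
end
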